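/- Let A ∈ ℝ^{m×n_A} and let B ∈ ℝ^{m×n_B} have unit-norm columns. Let C be any set of k columns of B with σ_min(C) > 0. Then for every ε > 0, every greedy sequence (T_i) for (A, B), and every natural number r ≥ 16k/(ε·σ_min(C)), we have f_A(T_r) ≥ (1 − ε)·f_A(C). (The greedy guarantee holds against any k-subset of columns, not only the optimal one.) -/

import Mathlib

open scoped RealInnerProductSpace

attribute [local instance] Classical.decEq

noncomputable def fVec {m : ℕ} (u : EuclideanSpace ℝ (Fin m))
    (S : Finset (EuclideanSpace ℝ (Fin m))) : ℝ :=
  ‖(Submodule.orthogonalProjectionOnto (Submodule.span ℝ (S : Set (EuclideanSpace ℝ (Fin m)))) u :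
      EuclideanSpace ℝ (Fin m))‖ ^ 2

noncomputable def fMat {m n : ℕ} (A : Fin n → EuclideanSpace ℝ (Fin m))
    (S : Finset (EuclideanSpace ℝ (Fin m))) : ℝ :=
  ∑ j, fVec (A j) S

noncomputable def sigmaMin {m : ℕ} (S : Finset (EuclideanSpace ℝ (Fin m))) : ℝ :=
  sInf {r : ℝ | ∃ α : S → ℝ, ∑ v, (α v) ^ 2 = 1 ∧
    r = ‖∑ v, α v • (v : EuclideanSpace ℝ (Fin m))‖ ^ 2}

noncomputable def sigmaMax {m : ℕ} (S : Finset (EuclideanSpace ℝ (Fin m))) : ℝ :=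
  sSup {r : ℝ | ∃ α : S → ℝ, ∑ v, (α v) ^ 2 = 1 ∧
    r = ‖∑ v, α v • (v : EuclideanSpace ℝ (Fin m))‖ ^ 2}

def IsGreedySeq {m nA nB : ℕ} (A : Fin nA → EuclideanSpace ℝ (Fin m))
    (B : Fin nB → EuclideanSpace ℝ (Fin m))
    (T : ℕ → Finset (EuclideanSpace ℝ (Fin m))) (b : ℕ → Fin nB) : Prop :=
  T 0 = ∅ ∧ ∀ i, T (i + 1) = insert (B (b i)) (T i) ∧
    ∀ j, fMat A (insert (B j) (T i)) ≤ fMat A (insert (B (b i)) (T i))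

/-!
Let `x_i = f_A(C) - f_A(T_i)`. Projecting the residuals `A_j - Π_{T_i} A_j` onto `span C`
captures at least `x_i² / (4 f_A(C))` of their mass, and `σ_min(C)` converts that mass into
inner products with the unit columns of `C`; so some column of `C`, hence also the greedy
column, raises `f_A` by at least `σ_min(C) x_i² / (4 k f_A(C))`. Consequently `1 / x_i` grows
by `σ_min(C) / (4 k f_A(C))` per step, which forces `x_r < ε f_A(C)` once
`r ≥ 16 k / (ε σ_min(C))`.
-/
open Submodule

section Projection

variable {F : Type*} [NormedAddCommGroup F] [InnerProductSpace ℝ F]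
  {K L : Submodule ℝ F} [K.HasOrthogonalProjection] [L.HasOrthogonalProjection]

theorem norm_sq_starProjection_eq_add_of_le (h : K ≤ L) (u : F) :
    ‖L.starProjection u‖ ^ 2 =
      ‖K.starProjection u‖ ^ 2 + ‖L.starProjection (u - K.starProjection u)‖ ^ 2 := by
  have hKL : L.starProjection (K.starProjection u) = K.starProjection u :=
    starProjection_eq_self_iff.mpr (h (K.starProjection_apply_mem u))
  have horth : ⟪K.starProjection u, L.starProjection u - K.starProjection u⟫ = 0 := by
    have h₁ := K.starProjection_inner_eq_zero u _ (K.starProjection_apply_mem u)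
    have h₂ := L.starProjection_inner_eq_zero u _ (h (K.starProjection_apply_mem u))
    rw [real_inner_comm] at h₁ h₂
    rw [show L.starProjection u - K.starProjection u
        = (u - K.starProjection u) - (u - L.starProjection u) by abel,
      inner_sub_right, h₁, h₂, sub_zero]
  rw [map_sub, hKL]
  calc ‖L.starProjection u‖ ^ 2
      = ‖K.starProjection u + (L.starProjection u - K.starProjection u)‖ ^ 2 := by
        rw [add_sub_cancel]
    _ = _ := by rw [norm_add_sq_real, horth]; ring

theorem inner_sq_le_norm_sq_starProjection {c : F} (hc : c ∈ L) (hc₁ : ‖c‖ ≤ 1) (w : F) :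
    ⟪w, c⟫ ^ 2 ≤ ‖L.starProjection w‖ ^ 2 := by
  have h : |⟪w, c⟫| ≤ ‖L.starProjection w‖ := calc
    |⟪w, c⟫| = |⟪L.starProjection w, c⟫| := by
      rw [inner_starProjection_left_eq_right, starProjection_eq_self_iff.mpr hc]
    _ ≤ ‖L.starProjection w‖ * ‖c‖ := abs_real_inner_le_norm _ _
    _ ≤ ‖L.starProjection w‖ := mul_le_of_le_one_right (norm_nonneg _) hc₁
  simpa only [sq_abs] using pow_le_pow_left₀ (abs_nonneg _) h 2

theorem sq_norm_starProjection_sub_sq_norm_le (u : F) :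
    ‖L.starProjection u‖ ^ 2 - ‖K.starProjection u‖ ^ 2 ≤
      (‖L.starProjection u‖ + ‖K.starProjection u‖) *
        ‖L.starProjection (u - K.starProjection u)‖ := by
  have h : ‖L.starProjection u‖ ≤
      ‖L.starProjection (u - K.starProjection u)‖ + ‖K.starProjection u‖ := calc
    ‖L.starProjection u‖ = ‖L.starProjection (u - K.starProjection u) +
        L.starProjection (K.starProjection u)‖ := by rw [← map_add, sub_add_cancel]
    _ ≤ _ := norm_add_le_of_le le_rfl (L.norm_starProjection_apply_le _)
  nlinarith [norm_nonneg (L.starProjection u), norm_nonneg (K.starProjection u)]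

end Projection

theorem inv_add_le_inv_of_mul_sq_le_sub {c x y : ℝ} (hc : 0 ≤ c) (hy : 0 < y)
    (h : c * x ^ 2 ≤ x - y) : x⁻¹ + c ≤ y⁻¹ := by
  have hyx : y ≤ x := by nlinarith [sq_nonneg x]
  have hx : 0 < x := hy.trans_le hyx
  rw [← sub_nonneg, show y⁻¹ - (x⁻¹ + c) = (x - y - c * x * y) / (x * y) by field_simp; ring]
  have : c * x * y ≤ c * x ^ 2 := by rw [sq, ← mul_assoc]; gcongr
  exact div_nonneg (by linarith) (by positivity)

theorem inv_add_mul_le_inv_of_mul_sq_le_sub {x : ℕ → ℝ} {c : ℝ} (hc : 0 ≤ c) {r : ℕ}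
    (hpos : ∀ i ≤ r, 0 < x i) (hstep : ∀ i < r, c * x i ^ 2 ≤ x i - x (i + 1)) :
    (x 0)⁻¹ + r * c ≤ (x r)⁻¹ := by
  induction r with
  | zero => simp
  | succ r ih =>
    have ih := ih (fun i hi => hpos i (by omega)) (fun i hi => hstep i (by omega))
    have := inv_add_le_inv_of_mul_sq_le_sub hc (hpos (r + 1) le_rfl) (hstep r (by omega))
    push_cast
    linarith

section Columns

variable {m : ℕ}

local notation "E" => EuclideanSpace ℝ (Fin m)

local notation "P[" S "]" => Submodule.starProjection (span ℝ ((S : Finset E) : Set E))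

theorem fVec_def (u : E) (S : Finset E) : fVec u S = ‖P[S] u‖ ^ 2 := rfl

theorem fVec_add_inner_sq_le_fVec_insert (u : E) (S : Finset E) {c : E} (hc : ‖c‖ ≤ 1) :
    fVec u S + ⟪u - P[S] u, c⟫ ^ 2 ≤ fVec u (insert c S) := by
  have hle : span ℝ (S : Set E) ≤ span ℝ ((insert c S : Finset E) : Set E) :=
    span_mono (by simp)
  rw [fVec_def, fVec_def, norm_sq_starProjection_eq_add_of_le hle]
  exact add_le_add_right (inner_sq_le_norm_sq_starProjection
    (subset_span (Finset.mem_coe.mpr (Finset.mem_insert_self c S))) hc _) _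

theorem fMat_nonneg {n : ℕ} (A : Fin n → E) (S : Finset E) : 0 ≤ fMat A S :=
  Finset.sum_nonneg fun _ _ => sq_nonneg _

theorem fMat_mono {n : ℕ} (A : Fin n → E) {S S' : Finset E} (h : S ⊆ S') :
    fMat A S ≤ fMat A S' := by
  refine Finset.sum_le_sum fun j _ => ?_
  rw [fVec_def, fVec_def,
    norm_sq_starProjection_eq_add_of_le (span_mono (Finset.coe_subset.mpr h))]
  exact le_add_of_nonneg_right (sq_nonneg _)

theorem sigmaMin_nonneg (S : Finset E) : 0 ≤ sigmaMin S :=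
  Real.sInf_nonneg <| by rintro _ ⟨_, _, rfl⟩; positivity

theorem sigmaMin_empty : sigmaMin (∅ : Finset E) = 0 := by
  simp [sigmaMin]

theorem sigmaMin_mul_sum_sq_le (S : Finset E) (α : S → ℝ) :
    sigmaMin S * ∑ v, α v ^ 2 ≤ ‖∑ v, α v • (v : E)‖ ^ 2 := by
  set s := ∑ v, α v ^ 2
  rcases (show 0 ≤ s by positivity).eq_or_lt with hs | hs
  · rw [← hs, mul_zero]
    positivity
  set t := √s
  have ht : 0 < t := Real.sqrt_pos.mpr hs
  have hts : t ^ 2 = s := Real.sq_sqrt hs.le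
  have hmem : ‖∑ v, (t⁻¹ * α v) • (v : E)‖ ^ 2 ∈ {r : ℝ | ∃ β : S → ℝ, ∑ v, β v ^ 2 = 1 ∧
      r = ‖∑ v, β v • (v : E)‖ ^ 2} := by
    refine ⟨fun v => t⁻¹ * α v, ?_, rfl⟩
    simp_rw [mul_pow, ← Finset.mul_sum, inv_pow, hts]
    exact inv_mul_cancel₀ hs.ne'
  have hσ : sigmaMin S ≤ ‖∑ v, α v • (v : E)‖ ^ 2 / s := by
    refine (csInf_le ⟨0, by rintro _ ⟨_, _, rfl⟩; positivity⟩ hmem).trans_eq ?_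
    simp_rw [mul_smul, ← Finset.smul_sum, norm_smul, mul_pow, norm_inv, Real.norm_of_nonneg ht.le,
      inv_pow, hts, inv_mul_eq_div]
  rwa [le_div_iff₀ hs] at hσ

theorem sigmaMin_mul_norm_sq_starProjection_le (C : Finset E) (u : E) :
    sigmaMin C * ‖P[C] u‖ ^ 2 ≤ ∑ c ∈ C, ⟪u, c⟫ ^ 2 := by
  obtain ⟨α, hα⟩ := mem_span_finset'.mp (starProjection_apply_mem (span ℝ (C : Set E)) u)
  set p := P[C] u
  set R := ∑ c ∈ C, ⟪u, c⟫ ^ 2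
  have hp : ‖p‖ ^ 2 = ∑ v : C, α v * ⟪u, v⟫ := calc
    ‖p‖ ^ 2 = ⟪u, p⟫ := by
      have := starProjection_inner_eq_zero u p (starProjection_apply_mem _ u)
      rw [inner_sub_left, real_inner_self_eq_norm_sq] at this
      linarith
    _ = _ := by simp_rw [← hα, inner_sum, real_inner_smul_right]
  have hcs : (‖p‖ ^ 2) ^ 2 ≤ (∑ v : C, α v ^ 2) * R := by
    rw [hp, show R = ∑ v : C, ⟪u, v⟫ ^ 2 from (Finset.sum_coe_sort C _).symm]
    exact Finset.sum_mul_sq_le_sq_mul_sq _ _ _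
  have hσ : sigmaMin C * ∑ v : C, α v ^ 2 ≤ ‖p‖ ^ 2 := hα ▸ sigmaMin_mul_sum_sq_le C α
  rcases (sq_nonneg ‖p‖).eq_or_lt with h0 | hpos
  · rw [← h0, mul_zero]
    positivity
  refine le_of_mul_le_mul_right ?_ hpos
  calc sigmaMin C * ‖p‖ ^ 2 * ‖p‖ ^ 2 = sigmaMin C * (‖p‖ ^ 2) ^ 2 := by ring
    _ ≤ sigmaMin C * ((∑ v : C, α v ^ 2) * R) :=
      mul_le_mul_of_nonneg_left hcs (sigmaMin_nonneg C)
    _ = (sigmaMin C * ∑ v : C, α v ^ 2) * R := by ring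
    _ ≤ ‖p‖ ^ 2 * R := mul_le_mul_of_nonneg_right hσ (by positivity)
    _ = R * ‖p‖ ^ 2 := mul_comm _ _

theorem sigmaMin_mul_sum_norm_sq_le_sum_gain {n : ℕ} (A : Fin n → E) (T C : Finset E)
    (hC : ∀ c ∈ C, ‖c‖ ≤ 1) :
    sigmaMin C * ∑ j, ‖P[C] (A j - P[T] (A j))‖ ^ 2 ≤
      ∑ c ∈ C, (fMat A (insert c T) - fMat A T) := calc
  _ = ∑ j, sigmaMin C * ‖P[C] (A j - P[T] (A j))‖ ^ 2 := Finset.mul_sum _ _ _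
  _ ≤ ∑ j, ∑ c ∈ C, ⟪A j - P[T] (A j), c⟫ ^ 2 :=
    Finset.sum_le_sum fun j _ => sigmaMin_mul_norm_sq_starProjection_le C _
  _ = ∑ c ∈ C, ∑ j, ⟪A j - P[T] (A j), c⟫ ^ 2 := Finset.sum_comm
  _ ≤ _ := Finset.sum_le_sum fun c hc => by
    rw [fMat, fMat, ← Finset.sum_sub_distrib]
    exact Finset.sum_le_sum fun j _ =>
      le_sub_iff_add_le'.mpr (fVec_add_inner_sq_le_fVec_insert (A j) T (hC c hc))

theorem sq_fMat_sub_le {n : ℕ} (A : Fin n → E) {T C : Finset E} (hTC : fMat A T ≤ fMat A C) :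
    (fMat A C - fMat A T) ^ 2 ≤ 4 * fMat A C * ∑ j, ‖P[C] (A j - P[T] (A j))‖ ^ 2 := by
  set a : Fin n → ℝ := fun j => ‖P[C] (A j)‖
  set b : Fin n → ℝ := fun j => ‖P[T] (A j)‖
  have hC : fMat A C = ∑ j, a j ^ 2 := rfl
  have hT : fMat A T = ∑ j, b j ^ 2 := rfl
  have hab : ∑ j, (a j + b j) ^ 2 ≤ 4 * fMat A C := calc
    _ ≤ ∑ j, (2 * a j ^ 2 + 2 * b j ^ 2) :=
      Finset.sum_le_sum fun j _ => by nlinarith [sq_nonneg (a j - b j)]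
    _ = 2 * fMat A C + 2 * fMat A T := by
      rw [Finset.sum_add_distrib, ← Finset.mul_sum, ← Finset.mul_sum, hC, hT]
    _ ≤ 4 * fMat A C := by linarith
  calc (fMat A C - fMat A T) ^ 2 ≤ (∑ j, (a j + b j) * ‖P[C] (A j - P[T] (A j))‖) ^ 2 := by
        refine pow_le_pow_left₀ (sub_nonneg.mpr hTC) ?_ 2
        rw [hC, hT, ← Finset.sum_sub_distrib]
        exact Finset.sum_le_sum fun j _ => sq_norm_starProjection_sub_sq_norm_le _
    _ ≤ (∑ j, (a j + b j) ^ 2) * ∑ j, ‖P[C] (A j - P[T] (A j))‖ ^ 2 :=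
      Finset.sum_mul_sq_le_sq_mul_sq _ _ _
    _ ≤ _ := by gcongr

variable {nA nB : ℕ} {A : Fin nA → EuclideanSpace ℝ (Fin m)}
  {B : Fin nB → EuclideanSpace ℝ (Fin m)} {T : ℕ → Finset (EuclideanSpace ℝ (Fin m))}
  {b : ℕ → Fin nB}

theorem IsGreedySeq.monotone (h : IsGreedySeq A B T b) : Monotone T :=
  monotone_nat_of_le_succ fun i => (h.2 i).1 ▸ Finset.subset_insert _ _

theorem IsGreedySeq.sum_gain_le (h : IsGreedySeq A B T b) {C : Finset E}
    (hC : C ⊆ Finset.image B Finset.univ) (i : ℕ) :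
    ∑ c ∈ C, (fMat A (insert c (T i)) - fMat A (T i)) ≤
      C.card * (fMat A (T (i + 1)) - fMat A (T i)) := by
  rw [← nsmul_eq_mul]
  refine Finset.sum_le_card_nsmul _ _ _ fun c hc => ?_
  obtain ⟨j, -, rfl⟩ := Finset.mem_image.mp (hC hc)
  rw [(h.2 i).1]
  exact sub_le_sub_right ((h.2 i).2 j) _

theorem IsGreedySeq.sigmaMin_mul_sq_le (h : IsGreedySeq A B T b) (hB : ∀ j, ‖B j‖ = 1)
    {C : Finset E} (hC : C ⊆ Finset.image B Finset.univ) {i : ℕ}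
    (hTC : fMat A (T i) ≤ fMat A C) :
    sigmaMin C * (fMat A C - fMat A (T i)) ^ 2 ≤
      4 * fMat A C * C.card * (fMat A (T (i + 1)) - fMat A (T i)) := by
  have hC₁ : ∀ c ∈ C, ‖c‖ ≤ 1 := fun c hc => by
    obtain ⟨j, -, rfl⟩ := Finset.mem_image.mp (hC hc)
    exact (hB j).le
  have hfC := fMat_nonneg A C
  calc sigmaMin C * (fMat A C - fMat A (T i)) ^ 2
      ≤ sigmaMin C * (4 * fMat A C * ∑ j, ‖P[C] (A j - P[T i] (A j))‖ ^ 2) :=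
        mul_le_mul_of_nonneg_left (sq_fMat_sub_le A hTC) (sigmaMin_nonneg C)
    _ = 4 * fMat A C * (sigmaMin C * ∑ j, ‖P[C] (A j - P[T i] (A j))‖ ^ 2) := by ring
    _ ≤ 4 * fMat A C * ∑ c ∈ C, (fMat A (insert c (T i)) - fMat A (T i)) := by
      gcongr
      exact sigmaMin_mul_sum_norm_sq_le_sum_gain A (T i) C hC₁
    _ ≤ 4 * fMat A C * (C.card * (fMat A (T (i + 1)) - fMat A (T i))) := by
      gcongr
      exact h.sum_gain_le hC i
    _ = _ := by ring

end Columns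

/-- Greedy column subset selection guarantee against any k-subset of columns. -/
theorem greedy_css_any_subset {m nA nB : ℕ}
    (A : Fin nA → EuclideanSpace ℝ (Fin m)) (B : Fin nB → EuclideanSpace ℝ (Fin m))
    (hB : ∀ j, ‖B j‖ = 1) (k : ℕ)
    (C : Finset (EuclideanSpace ℝ (Fin m)))
    (hCsub : C ⊆ Finset.image B Finset.univ) (hCcard : C.card = k)
    (hσ : 0 < sigmaMin C) :
    ∀ ε : ℝ, 0 < ε →
    ∀ (T : ℕ → Finset (EuclideanSpace ℝ (Fin m))) (b : ℕ → Fin nB),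
      IsGreedySeq A B T b →
    ∀ r : ℕ, (16 * k : ℝ) / (ε * sigmaMin C) ≤ r →
      (1 - ε) * fMat A C ≤ fMat A (T r) := by
  intro ε hε T b hgr r hr
  set σ := sigmaMin C
  set OPT := fMat A C
  by_contra! hlt
  have hOPT : 0 < OPT := by nlinarith [fMat_nonneg A (T r), fMat_nonneg A C]
  have hk : 0 < (k : ℝ) := by
    rw [← hCcard, Nat.cast_pos, Finset.card_pos, Finset.nonempty_iff_ne_empty]
    rintro rfl
    exact hσ.ne' sigmaMin_empty
  have hx : ∀ i ≤ r, ε * OPT < OPT - fMat A (T i) := fun i hi => by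
    linarith [fMat_mono A (hgr.monotone hi)]
  have hstep : ∀ i < r, σ / (4 * k * OPT) * (OPT - fMat A (T i)) ^ 2 ≤
      (OPT - fMat A (T i)) - (OPT - fMat A (T (i + 1))) := fun i hi => by
    have hTi : fMat A (T i) ≤ OPT := by linarith [hx i hi.le, mul_pos hε hOPT]
    have := hgr.sigmaMin_mul_sq_le hB hCsub hTi
    rw [hCcard] at this
    rw [div_mul_eq_mul_div, div_le_iff₀ (by positivity)]
    linear_combination this
  have hrec := inv_add_mul_le_inv_of_mul_sq_le_sub (x := fun i => OPT - fMat A (T i))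
    (by positivity) (fun i hi => (mul_pos hε hOPT).trans (hx i hi)) hstep
  have hxr : (OPT - fMat A (T r))⁻¹ < (ε * OPT)⁻¹ :=
    inv_strictAnti₀ (by positivity) (hx r le_rfl)
  have hgrowth : 4 * (ε * OPT)⁻¹ ≤ r * (σ / (4 * k * OPT)) := calc
    4 * (ε * OPT)⁻¹ = 16 * k / (ε * σ) * (σ / (4 * k * OPT)) := by field_simp; ring
    _ ≤ _ := by gcongr
  have hx₀ : 0 < (OPT - fMat A (T 0))⁻¹ :=
    inv_pos.mpr ((mul_pos hε hOPT).trans (hx 0 r.zero_le))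
  have : 0 < (ε * OPT)⁻¹ := by positivity
  linarith
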